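/- arXiv:0808.2783 — 7 statements merged into one kernel-verified Lean document; each statement's English description precedes it below -/
import Mathlib

section
/- Let H0 and H1 be complex Hilbert spaces, r ≥ 0, δ > 0, and let A0 on H0 and A1 on H1 be bounded operators. Suppose there is λ ∈ ℂ such that A1 − λ·I is invertible (with bounded inverse), ‖A0 − λ·I‖ ≤ r, and ‖(A1 − λ·I)⁻¹‖ ≤ (r + δ)⁻¹. Then for every bounded operator Y : H0 → H1 the Sylvester equation X A0 − A1 X = Y has a unique bounded solution X, and this solution satisfies δ·‖X‖ ≤ ‖Y‖. (Bounded-operator version of Theorem 3.4 of the paper, due to Bhatia–Davis–McIntosh.) -/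
/-!
Shifting both coefficients by `λ` does not change the Sylvester operator, so with
`B₀ = A₀ - λ`, `B₁ = A₁ - λ` and `R = B₁⁻¹` the equation `X B₀ - B₁ X = Y` becomes the
fixed-point equation `X = R (X B₀ - Y)`. The right-hand side is a contraction of the Banach
space of operators, with constant `‖R‖ ‖B₀‖ ≤ r / (r + δ) < 1`, which gives existence and
uniqueness; taking norms in the fixed-point equation gives `(r + δ) ‖X‖ ≤ r ‖X‖ + ‖Y‖`.
-/

namespace ContinuousLinearMap

variable {𝕜 E F : Type*} [NontriviallyNormedField 𝕜]
  [NormedAddCommGroup E] [NormedSpace 𝕜 E] [NormedAddCommGroup F] [NormedSpace 𝕜 F]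

theorem comp_sub_smul_one_sub_sub_smul_one_comp (A₀ : E →L[𝕜] E) (A₁ : F →L[𝕜] F) (c : 𝕜)
    (X : E →L[𝕜] F) :
    X ∘L (A₀ - c • 1) - (A₁ - c • 1) ∘L X = X ∘L A₀ - A₁ ∘L X := by
  simp only [comp_sub, sub_comp, comp_smul, smul_comp, one_def, comp_id, id_comp,
    sub_sub_sub_cancel_right]

theorem norm_comp_comp_le (R : F →L[𝕜] F) (X : E →L[𝕜] F) (B : E →L[𝕜] E) :
    ‖R ∘L (X ∘L B)‖ ≤ ‖R‖ * ‖B‖ * ‖X‖ :=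
  calc ‖R ∘L (X ∘L B)‖ ≤ ‖R‖ * (‖X‖ * ‖B‖) :=
        (opNorm_comp_le _ _).trans (by gcongr; exact opNorm_comp_le _ _)
    _ = ‖R‖ * ‖B‖ * ‖X‖ := by ring

section Sylvester

variable {B₀ : E →L[𝕜] E} {B₁ R : F →L[𝕜] F} {X Y : E →L[𝕜] F}

theorem eq_comp_sub_of_sylvester (hR₁ : R ∘L B₁ = 1) (hX : X ∘L B₀ - B₁ ∘L X = Y) :
    R ∘L (X ∘L B₀ - Y) = X := by
  rw [← hX, sub_sub_cancel, ← comp_assoc, hR₁, one_def, id_comp]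

theorem sylvester_of_eq_comp_sub (hR₂ : B₁ ∘L R = 1) (hX : R ∘L (X ∘L B₀ - Y) = X) :
    X ∘L B₀ - B₁ ∘L X = Y := by
  rw [← hX, ← comp_assoc, hR₂, one_def, id_comp, hX, sub_sub_cancel]

theorem contractingWith_comp_sub (hRB : ‖R‖ * ‖B₀‖ < 1) (Y : E →L[𝕜] F) :
    ContractingWith (‖R‖₊ * ‖B₀‖₊) fun X : E →L[𝕜] F ↦ R ∘L (X ∘L B₀ - Y) := by
  refine ⟨hRB, LipschitzWith.of_dist_le_mul fun X X' ↦ ?_⟩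
  have hdiff : R ∘L (X ∘L B₀ - Y) - R ∘L (X' ∘L B₀ - Y) = R ∘L ((X - X') ∘L B₀) := by
    simp only [comp_sub, sub_comp]
    abel
  rw [dist_eq_norm, dist_eq_norm, hdiff]
  exact norm_comp_comp_le R (X - X') B₀

variable {r δ : ℝ}

theorem norm_mul_norm_lt_one (hB₀ : ‖B₀‖ ≤ r) (hR : ‖R‖ ≤ (r + δ)⁻¹) (hδ : 0 < δ) :
    ‖R‖ * ‖B₀‖ < 1 := by
  have hrδ : 0 < r + δ := by linarith [norm_nonneg B₀]
  calc ‖R‖ * ‖B₀‖ ≤ (r + δ)⁻¹ * r := by gcongr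
    _ < 1 := by rw [inv_mul_lt_one₀ hrδ]; linarith

theorem mul_norm_le_of_sylvester (hR₁ : R ∘L B₁ = 1) (hB₀ : ‖B₀‖ ≤ r)
    (hR : ‖R‖ ≤ (r + δ)⁻¹) (hδ : 0 < δ) (hX : X ∘L B₀ - B₁ ∘L X = Y) :
    δ * ‖X‖ ≤ ‖Y‖ := by
  have hrδ : 0 < r + δ := by linarith [norm_nonneg B₀]
  have hfix := eq_comp_sub_of_sylvester hR₁ hX
  have hX_le : ‖X‖ ≤ (r + δ)⁻¹ * (r * ‖X‖ + ‖Y‖) :=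
    calc ‖X‖ = ‖R ∘L (X ∘L B₀) - R ∘L Y‖ := by rw [← comp_sub, hfix]
      _ ≤ ‖R‖ * ‖B₀‖ * ‖X‖ + ‖R‖ * ‖Y‖ :=
        (norm_sub_le _ _).trans (add_le_add (norm_comp_comp_le _ _ _) (opNorm_comp_le _ _))
      _ = ‖R‖ * (‖B₀‖ * ‖X‖ + ‖Y‖) := by ring
      _ ≤ (r + δ)⁻¹ * (r * ‖X‖ + ‖Y‖) := by gcongr
  rw [le_inv_mul_iff₀ hrδ] at hX_le
  linarith

theorem existsUnique_sylvester [CompleteSpace F] (hR₁ : R ∘L B₁ = 1) (hR₂ : B₁ ∘L R = 1)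
    (hRB : ‖R‖ * ‖B₀‖ < 1) (Y : E →L[𝕜] F) :
    ∃! X : E →L[𝕜] F, X ∘L B₀ - B₁ ∘L X = Y := by
  have hφ := contractingWith_comp_sub hRB Y
  exact ⟨_, sylvester_of_eq_comp_sub hR₂ hφ.fixedPoint_isFixedPt,
    fun X hX ↦ hφ.fixedPoint_unique (eq_comp_sub_of_sylvester hR₁ hX)⟩

end Sylvester

end ContinuousLinearMap

open ContinuousLinearMap in
theorem sylvester_bhatia_davis_mcintosh_general
    {H0 : Type*} [NormedAddCommGroup H0] [InnerProductSpace ℂ H0]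
    {H1 : Type*} [NormedAddCommGroup H1] [InnerProductSpace ℂ H1] [CompleteSpace H1]
    (A0 : H0 →L[ℂ] H0) (A1 : H1 →L[ℂ] H1) (r δ : ℝ) (hδ : 0 < δ)
    (lam : ℂ) (R : H1 →L[ℂ] H1)
    (hR1 : R ∘L (A1 - lam • 1) = 1) (hR2 : (A1 - lam • 1) ∘L R = 1)
    (hA0 : ‖A0 - lam • (1 : H0 →L[ℂ] H0)‖ ≤ r)
    (hRnorm : ‖R‖ ≤ (r + δ)⁻¹)
    (Y : H0 →L[ℂ] H1) :
    (∃! X : H0 →L[ℂ] H1, X ∘L A0 - A1 ∘L X = Y) ∧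
      ∀ X : H0 →L[ℂ] H1, X ∘L A0 - A1 ∘L X = Y → δ * ‖X‖ ≤ ‖Y‖ := by
  simp only [← comp_sub_smul_one_sub_sub_smul_one_comp A0 A1 lam]
  exact ⟨existsUnique_sylvester hR1 hR2 (norm_mul_norm_lt_one hA0 hRnorm hδ) Y,
    fun X ↦ mul_norm_le_of_sylvester hR1 hA0 hRnorm hδ⟩

/-- Bounded-operator version of Theorem 3.4 of the paper (Bhatia–Davis–McIntosh):
if for some `λ ∈ ℂ` the operator `A1 - λ` is boundedly invertible with
`‖A0 - λ‖ ≤ r` and `‖(A1 - λ)⁻¹‖ ≤ (r + δ)⁻¹`, then for every bounded `Y : H0 → H1`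
the Sylvester equation `X A0 - A1 X = Y` has a unique bounded solution `X`, and this
solution satisfies `δ‖X‖ ≤ ‖Y‖`. -/
theorem sylvester_bhatia_davis_mcintosh
    {H0 : Type*} [NormedAddCommGroup H0] [InnerProductSpace ℂ H0] [CompleteSpace H0]
    {H1 : Type*} [NormedAddCommGroup H1] [InnerProductSpace ℂ H1] [CompleteSpace H1]
    (A0 : H0 →L[ℂ] H0) (A1 : H1 →L[ℂ] H1) (r δ : ℝ) (hr : 0 ≤ r) (hδ : 0 < δ)
    (lam : ℂ) (R : H1 →L[ℂ] H1)
    (hR1 : R ∘L (A1 - lam • 1) = 1) (hR2 : (A1 - lam • 1) ∘L R = 1)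
    (hA0 : ‖A0 - lam • (1 : H0 →L[ℂ] H0)‖ ≤ r)
    (hRnorm : ‖R‖ ≤ (r + δ)⁻¹)
    (Y : H0 →L[ℂ] H1) :
    (∃! X : H0 →L[ℂ] H1, X ∘L A0 - A1 ∘L X = Y) ∧
      ∀ X : H0 →L[ℂ] H1, X ∘L A0 - A1 ∘L X = Y → δ * ‖X‖ ≤ ‖Y‖ :=
  sylvester_bhatia_davis_mcintosh_general A0 A1 r δ hδ lam R hR1 hR2 hA0 hRnorm Y
end

section
/- Let H0 and H1 be complex Hilbert spaces, r ≥ 0, δ > 0, and let A0 on H0 and A1 on H1 be bounded normal operators. Suppose there is μ ∈ ℂ such that spectrum(A0) is contained in the closed disk of radius r centered at μ, while spectrum(A1) is disjoint from the open disk of radius r + δ centered at μ. Then for every bounded operator Y : H0 → H1 the Sylvester equation X A0 − A1 X = Y has a unique bounded solution X, and this solution satisfies δ·‖X‖ ≤ ‖Y‖. (Corollary 3.5 of the paper.) -/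
/-!
Shifting by `μ` turns the equation into `X a - b X = Y` with `a = A0 - μ` and `b = A1 - μ`.
The continuous functional calculus of a normal operator is isometric, so `‖a‖ ≤ r`, and `b` is
invertible with `‖b⁻¹‖ ≤ (r + δ)⁻¹`. Hence `X ↦ b⁻¹ (X a - Y)`, whose fixed points are exactly
the solutions, is a contraction with constant `r / (r + δ)`; and every solution satisfies
`(r + δ) ‖X‖ ≤ ‖b X‖ = ‖X a - Y‖ ≤ r ‖X‖ + ‖Y‖`.
-/

open Metric ContinuousLinearMap Function

namespace ContinuousLinearMap

variable {𝕜 E F : Type*} [NontriviallyNormedField 𝕜] [NormedAddCommGroup E] [NormedSpace 𝕜 E]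
  [NormedAddCommGroup F] [NormedSpace 𝕜 F]

def sylvester (a : E →L[𝕜] E) (b : F →L[𝕜] F) (X : E →L[𝕜] F) : E →L[𝕜] F :=
  X ∘L a - b ∘L X

theorem sylvester_sub_algebraMap (a : E →L[𝕜] E) (b : F →L[𝕜] F) (c : 𝕜) :
    sylvester (a - algebraMap 𝕜 _ c) (b - algebraMap 𝕜 _ c) = sylvester a b := by
  ext X v
  simp [sylvester, Algebra.algebraMap_eq_smul_one]

theorem units_inv_comp_eq_iff (b : (F →L[𝕜] F)ˣ) {X Z : E →L[𝕜] F} :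
    (↑b⁻¹ : F →L[𝕜] F) ∘L Z = X ↔ Z = (b : F →L[𝕜] F) ∘L X := by
  constructor <;> rintro rfl
  · rw [← comp_assoc, ← mul_def, Units.mul_inv, one_def, id_comp]
  · rw [← comp_assoc, ← mul_def, Units.inv_mul, one_def, id_comp]

theorem norm_le_of_sylvester_eq {a : E →L[𝕜] E} {b : (F →L[𝕜] F)ˣ} {r ρ : ℝ} (hρ : 0 < ρ)
    (ha : ‖a‖ ≤ r) (hb : ‖(↑b⁻¹ : F →L[𝕜] F)‖ ≤ ρ⁻¹) {X Y : E →L[𝕜] F}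
    (h : sylvester a b X = Y) : (ρ - r) * ‖X‖ ≤ ‖Y‖ := by
  have hX : X = (↑b⁻¹ : F →L[𝕜] F) ∘L (X ∘L a - Y) :=
    ((units_inv_comp_eq_iff b).2 (by rw [← h, sylvester]; abel)).symm
  have hXY : ‖X‖ ≤ ρ⁻¹ * (‖X‖ * r + ‖Y‖) :=
    calc ‖X‖ = ‖(↑b⁻¹ : F →L[𝕜] F) ∘L (X ∘L a - Y)‖ := congrArg norm hX
      _ ≤ ‖(↑b⁻¹ : F →L[𝕜] F)‖ * ‖X ∘L a - Y‖ := opNorm_comp_le _ _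
      _ ≤ ρ⁻¹ * (‖X‖ * r + ‖Y‖) := by
          gcongr
          exact (norm_sub_le _ _).trans (by gcongr; exact (opNorm_comp_le _ _).trans (by gcongr))
  rw [le_inv_mul_iff₀ hρ] at hXY
  linarith

theorem existsUnique_sylvester_eq [CompleteSpace F] (a : E →L[𝕜] E) (b : (F →L[𝕜] F)ˣ)
    (h : ‖(↑b⁻¹ : F →L[𝕜] F)‖ * ‖a‖ < 1) (Y : E →L[𝕜] F) :
    ∃! X : E →L[𝕜] F, sylvester a b X = Y := by
  set T : (E →L[𝕜] F) → E →L[𝕜] F := fun X ↦ (↑b⁻¹ : F →L[𝕜] F) ∘L (X ∘L a - Y)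
  have hT : ContractingWith (‖(↑b⁻¹ : F →L[𝕜] F)‖₊ * ‖a‖₊) T := by
    refine ⟨by exact_mod_cast h, LipschitzWith.of_dist_le_mul fun X X' ↦ ?_⟩
    simp only [T, dist_eq_norm, NNReal.coe_mul, coe_nnnorm, ← comp_sub, sub_sub_sub_cancel_right,
      ← sub_comp]
    calc _ ≤ ‖(↑b⁻¹ : F →L[𝕜] F)‖ * (‖X - X'‖ * ‖a‖) :=
          (opNorm_comp_le _ _).trans (by gcongr; exact opNorm_comp_le _ _)
      _ = _ := by ring
  have hfix : ∀ X, sylvester a b X = Y ↔ IsFixedPt T X := fun X ↦ by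
    rw [IsFixedPt, units_inv_comp_eq_iff, sylvester, sub_eq_iff_eq_add, ← sub_eq_iff_eq_add']
  exact ⟨_, (hfix _).2 (hT.fixedPoint_isFixedPt), fun X hX ↦ hT.fixedPoint_unique ((hfix X).1 hX)⟩

end ContinuousLinearMap

namespace IsStarNormal

variable {A : Type*} [CStarAlgebra A] {a : A} [IsStarNormal a]

theorem cfc_sub_const (μ : ℂ) : cfc (fun z ↦ z - μ) a = a - algebraMap ℂ A μ := by
  rw [cfc_sub .., cfc_id' .., cfc_const ..]

theorem norm_sub_algebraMap_le {μ : ℂ} {r : ℝ} (hr : 0 ≤ r) (h : spectrum ℂ a ⊆ closedBall μ r) :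
    ‖a - algebraMap ℂ A μ‖ ≤ r := by
  rw [← cfc_sub_const]
  exact norm_cfc_le hr fun z hz ↦ mem_closedBall_iff_norm.1 (h hz)

theorem exists_unit_sub_algebraMap {μ : ℂ} {ρ : ℝ} (hρ : 0 < ρ)
    (h : Disjoint (spectrum ℂ a) (ball μ ρ)) :
    ∃ u : Aˣ, (u : A) = a - algebraMap ℂ A μ ∧ ‖(↑u⁻¹ : A)‖ ≤ ρ⁻¹ := by
  have hfar : ∀ z ∈ spectrum ℂ a, ρ ≤ ‖z - μ‖ := fun z hz ↦
    not_lt.1 fun hlt ↦ h.notMem_of_mem_left hz (mem_ball_iff_norm.2 hlt)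
  have hne : ∀ z ∈ spectrum ℂ a, z - μ ≠ 0 := fun z hz ↦
    norm_pos_iff.1 (hρ.trans_le (hfar z hz))
  refine ⟨cfcUnits _ a hne, cfc_sub_const μ, norm_cfc_le (by positivity) fun z hz ↦ ?_⟩
  rw [norm_inv]
  exact inv_anti₀ hρ (hfar z hz)

end IsStarNormal

/-- Corollary 3.5 of the paper: if `A0` and `A1` are bounded normal operators,
`spectrum(A0)` lies in the closed disk of radius `r` centered at `μ`, and `spectrum(A1)`
is disjoint from the open disk of radius `r + δ` centered at `μ`, then for every bounded
`Y : H0 → H1` the Sylvester equation `X A0 - A1 X = Y` has a unique bounded solution `X`,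
and this solution satisfies `δ‖X‖ ≤ ‖Y‖`. -/
theorem sylvester_normal_disk_separation
    {H0 : Type*} [NormedAddCommGroup H0] [InnerProductSpace ℂ H0] [CompleteSpace H0]
    {H1 : Type*} [NormedAddCommGroup H1] [InnerProductSpace ℂ H1] [CompleteSpace H1]
    (A0 : H0 →L[ℂ] H0) (A1 : H1 →L[ℂ] H1) (r δ : ℝ) (hr : 0 ≤ r) (hδ : 0 < δ)
    (hA0 : IsStarNormal A0) (hA1 : IsStarNormal A1) (μ : ℂ)
    (hs0 : spectrum ℂ A0 ⊆ Metric.closedBall μ r)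
    (hs1 : spectrum ℂ A1 ∩ Metric.ball μ (r + δ) = ∅)
    (Y : H0 →L[ℂ] H1) :
    (∃! X : H0 →L[ℂ] H1, X ∘L A0 - A1 ∘L X = Y) ∧
      ∀ X : H0 →L[ℂ] H1, X ∘L A0 - A1 ∘L X = Y → δ * ‖X‖ ≤ ‖Y‖ := by
  have hrδ : 0 < r + δ := by positivity
  have ha : ‖A0 - algebraMap ℂ _ μ‖ ≤ r := IsStarNormal.norm_sub_algebraMap_le hr hs0
  obtain ⟨b, hb, hb_inv⟩ :=
    IsStarNormal.exists_unit_sub_algebraMap hrδ (Set.disjoint_iff_inter_eq_empty.2 hs1)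
  have hsylv : ∀ X, X ∘L A0 - A1 ∘L X = sylvester (A0 - algebraMap ℂ _ μ) (b : H1 →L[ℂ] H1) X :=
    fun X ↦ by rw [hb, sylvester_sub_algebraMap, sylvester]
  simp only [hsylv]
  refine ⟨existsUnique_sylvester_eq _ b ?_ Y, fun X hX ↦ ?_⟩
  · calc _ ≤ (r + δ)⁻¹ * r := by gcongr
      _ < 1 := (inv_mul_lt_one₀ hrδ).2 (by linarith)
  · simpa only [add_sub_cancel_left] using norm_le_of_sylvester_eq hrδ ha hb_inv hX
end

section
/- Let H0 and H1 be complex Hilbert spaces, let A0 on H0, A1 on H1, B : H1 → H0 and C : H0 → H1 be bounded operators. Suppose the bounded operator K : H0 → H1 satisfies K A0 − A1 K + K B K = C and the bounded operator K' : H1 → H0 satisfies K' A1 − A0 K' + K' C K' = B. Then the operator identities (I − K'K)(A0 + BK) = (A0 − K'C)(I − K'K) on H0 and (I − KK')(A1 + CK') = (A1 − KB)(I − KK') on H1 hold. (Bounded-operator version of Lemma 2.4 of the paper.) -/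
/-- Bounded-operator version of Lemma 2.4 of the paper: if `K` solves the Riccati equation
`K A0 - A1 K + K B K = C` and `K'` solves the dual Riccati equation
`K' A1 - A0 K' + K' C K' = B`, then the identities
`(I - K'K)(A0 + BK) = (A0 - K'C)(I - K'K)` and
`(I - KK')(A1 + CK') = (A1 - KB)(I - KK')` hold. -/
theorem riccati_intertwining_identities
    {H0 : Type*} [NormedAddCommGroup H0] [InnerProductSpace ℂ H0] [CompleteSpace H0]
    {H1 : Type*} [NormedAddCommGroup H1] [InnerProductSpace ℂ H1] [CompleteSpace H1]
    (A0 : H0 →L[ℂ] H0) (A1 : H1 →L[ℂ] H1) (B : H1 →L[ℂ] H0) (C : H0 →L[ℂ] H1)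
    (K : H0 →L[ℂ] H1) (K' : H1 →L[ℂ] H0)
    (hK : K ∘L A0 - A1 ∘L K + (K ∘L B) ∘L K = C)
    (hK' : K' ∘L A1 - A0 ∘L K' + (K' ∘L C) ∘L K' = B) :
    (1 - K' ∘L K) ∘L (A0 + B ∘L K) = (A0 - K' ∘L C) ∘L (1 - K' ∘L K) ∧
    (1 - K ∘L K') ∘L (A1 + C ∘L K') = (A1 - K ∘L B) ∘L (1 - K ∘L K') := by
  constructor
  · ext x
    have h1 : K (A0 x) - A1 (K x) + K (B (K x)) = C x := by
      have := congrArg (fun f : H0 →L[ℂ] H1 => f x) hK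
      simpa using this
    have h2 : K' (A1 (K x)) - A0 (K' (K x)) + K' (C (K' (K x))) = B (K x) := by
      have := congrArg (fun f : H1 →L[ℂ] H0 => f (K x)) hK'
      simpa using this
    simp only [ContinuousLinearMap.comp_apply, ContinuousLinearMap.add_apply,
      ContinuousLinearMap.sub_apply, ContinuousLinearMap.one_apply, map_add, map_sub]
    have h3 := congrArg (fun v => K' (K v)) h2
    simp only [map_add, map_sub] at h3
    rw [← h2, ← h1]
    simp only [map_add, map_sub]
    rw [← h3]
    abel
  · ext x
    have h1 : K' (A1 x) - A0 (K' x) + K' (C (K' x)) = B x := by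
      have := congrArg (fun f : H1 →L[ℂ] H0 => f x) hK'
      simpa using this
    have h2 : K (A0 (K' x)) - A1 (K (K' x)) + K (B (K (K' x))) = C (K' x) := by
      have := congrArg (fun f : H0 →L[ℂ] H1 => f (K' x)) hK
      simpa using this
    simp only [ContinuousLinearMap.comp_apply, ContinuousLinearMap.add_apply,
      ContinuousLinearMap.sub_apply, ContinuousLinearMap.one_apply, map_add, map_sub]
    have h3 := congrArg (fun v => K (K' v)) h2
    simp only [map_add, map_sub] at h3
    rw [← h2, ← h1]
    simp only [map_add, map_sub]
    rw [← h3]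
    abel
end

section
/- Let H0 and H1 be complex Hilbert spaces, let A0 on H0 and A1 on H1 be bounded self-adjoint operators, and let B : H1 → H0 be a bounded operator. Suppose the bounded operator K : H0 → H1 satisfies the Riccati equation K A0 − A1 K + K B K = −B*. Then (I − K*K)(A0 + BK) = (A0 + K*B*)(I − K*K) as operators on H0, and consequently the operator (I − K*K)(A0 + BK) is self-adjoint. (Identity (5.13) established in the proof of Theorem 5.2 of the paper; bounded-operator version.) -/
set_option maxHeartbeats 1000000


open ContinuousLinearMap

/-- Identity (5.13) from the proof of Theorem 5.2 of the paper (bounded-operator version):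
if `A0`, `A1` are bounded self-adjoint operators and the bounded operator `K : H0 → H1`
satisfies the Riccati equation `K A0 - A1 K + K B K = -B*`, then
`(I - K*K)(A0 + BK) = (A0 + K*B*)(I - K*K)`, and consequently the operator
`(I - K*K)(A0 + BK)` is self-adjoint. -/
theorem riccati_J_selfAdjoint_identity
    {H0 : Type*} [NormedAddCommGroup H0] [InnerProductSpace ℂ H0] [CompleteSpace H0]
    {H1 : Type*} [NormedAddCommGroup H1] [InnerProductSpace ℂ H1] [CompleteSpace H1]
    (A0 : H0 →L[ℂ] H0) (A1 : H1 →L[ℂ] H1) (B : H1 →L[ℂ] H0)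
    (hA0 : IsSelfAdjoint A0) (hA1 : IsSelfAdjoint A1)
    (K : H0 →L[ℂ] H1)
    (hK : K ∘L A0 - A1 ∘L K + (K ∘L B) ∘L K = -(adjoint B)) :
    (1 - adjoint K ∘L K) ∘L (A0 + B ∘L K) =
        (A0 + adjoint K ∘L adjoint B) ∘L (1 - adjoint K ∘L K) ∧
      IsSelfAdjoint ((1 - adjoint K ∘L K) ∘L (A0 + B ∘L K)) := by
  have hadj : A0 ∘L adjoint K - adjoint K ∘L A1 +
      (adjoint K ∘L adjoint B) ∘L adjoint K = -B := by
    have := congrArg (ContinuousLinearMap.adjoint) hK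
    simpa [map_sub, map_add, map_neg, adjoint_comp, adjoint_adjoint,
      hA0.adjoint_eq, hA1.adjoint_eq, comp_assoc] using this
  have e1 : adjoint K ∘L (K ∘L A0 - A1 ∘L K + (K ∘L B) ∘L K) =
      adjoint K ∘L (-(adjoint B)) := by rw [hK]
  have e2 : (A0 ∘L adjoint K - adjoint K ∘L A1 +
      (adjoint K ∘L adjoint B) ∘L adjoint K) ∘L K = (-B) ∘L K := by rw [hadj]
  simp only [comp_sub, comp_add, sub_comp, add_comp, comp_neg, neg_comp, comp_assoc] at e1 e2
  have key : (1 - adjoint K ∘L K) ∘L (A0 + B ∘L K) =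
      (A0 + adjoint K ∘L adjoint B) ∘L (1 - adjoint K ∘L K) := by
    simp only [comp_sub, comp_add, sub_comp, add_comp, one_def, id_comp, comp_id,
      comp_assoc]
    rw [← sub_eq_zero] at e1 e2 ⊢
    calc A0 - adjoint K ∘L (K ∘L A0) + (B ∘L K - adjoint K ∘L (K ∘L (B ∘L K))) -
        (A0 + adjoint K ∘L adjoint B -
          (A0 ∘L (adjoint K ∘L K) + adjoint K ∘L (adjoint B ∘L (adjoint K ∘L K))))
        = (A0 ∘L (adjoint K ∘L K) - adjoint K ∘L (A1 ∘L K) +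
            adjoint K ∘L (adjoint B ∘L (adjoint K ∘L K)) - -(B ∘L K)) -
          (adjoint K ∘L (K ∘L A0) - adjoint K ∘L (A1 ∘L K) +
            adjoint K ∘L (K ∘L (B ∘L K)) - -(adjoint K ∘L adjoint B)) := by abel
      _ = 0 := by rw [e1, e2]; simp
  refine ⟨key, ?_⟩
  rw [IsSelfAdjoint, star_eq_adjoint, adjoint_comp, map_sub, map_add, adjoint_comp,
    adjoint_comp, adjoint_adjoint, hA0.adjoint_eq]
  have h1 : adjoint (1 : H0 →L[ℂ] H0) = 1 := by
    ext x; simp [ContinuousLinearMap.one_def, adjoint_id]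
  rw [h1, key]
end

section
/- Let H0 and H1 be complex Hilbert spaces, let A0 on H0 and A1 on H1 be bounded self-adjoint operators, let B : H1 → H0 be a bounded operator, and let L be the block operator matrix on H = H0 ⊕ H1 given by L(x0,x1) = (A0 x0 + B x1, −B* x0 + A1 x1) (so L is J-self-adjoint with respect to J(x0,x1) = (x0,−x1)). Suppose there exists a bounded operator K : H0 → H1 with ‖K‖ < 1 satisfying K A0 − A1 K + K B K = −B*. Then the spectrum of L is real (spectrum(L) ⊆ ℝ), and L is similar to a self-adjoint operator: there exist a bounded operator T on H with bounded inverse and a bounded self-adjoint operator Λ on H such that L = T ∘ Λ ∘ T⁻¹; moreover Λ can be chosen block diagonal, i.e. leaving the subspaces H0 ⊕ {0} and {0} ⊕ H1 invariant. (Bounded-operator version of Theorem 5.2 (i) of the paper.) -/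
/-!
The Riccati equation and its adjoint say that `L V = V diag(Z₀, Z₁)` for `V = [[1, K†], [K, 1]]`,
`Z₀ = A₀ + B K` and `Z₁ = A₁ - B† K†`, and `V` is invertible because `‖K‖ < 1`. The Riccati
equation also gives `Z₀† (1 - K†K) = (1 - K†K) Z₀`: `Z₀` is self-adjoint for the equivalent
inner product `⟪(1 - K†K) x, y⟫`, so `Λ₀ = S₀ Z₀ S₀⁻¹` is self-adjoint for `S₀ = (1 - K†K)^{1/2}`.
Since `K†` solves the Riccati equation with the roles of `H₀` and `H₁` exchanged (data
`A₁, A₀, -B†`), the same argument applies to `Z₁`. Hence `L = T Λ T⁻¹` with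
`T = V diag(S₀, S₁)⁻¹` and `Λ = diag(Λ₀, Λ₁)`.
-/

open ContinuousLinearMap
open scoped InnerProduct

theorem isSelfAdjoint_units_conj_of_star_mul_eq {R : Type*} [Monoid R] [StarMul R] {s : Rˣ}
    (hs : IsSelfAdjoint (s : R)) {z : R} (hz : star z * (s * s) = s * s * z) :
    IsSelfAdjoint (s * z * ↑s⁻¹) := by
  have hs_inv : star (↑s⁻¹ : R) = ↑s⁻¹ := by
    rw [← Units.coe_star_inv, show star s = s from Units.ext hs]
  calc star (s * z * ↑s⁻¹) = ↑s⁻¹ * (star z * (s * s)) * ↑s⁻¹ := by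
        simp only [star_mul, hs_inv, hs.star_eq, mul_assoc, Units.mul_inv, mul_one]
    _ = s * z * ↑s⁻¹ := by
        rw [hz]; simp only [mul_assoc, Units.inv_mul_cancel_left]

theorem eq_units_conj_of_mul_eq_mul {M : Type*} [Monoid M] {a b c : M} {u w : Mˣ}
    (ha : a * u = u * b) (hc : c * w = w * b) : a = ↑(u * w⁻¹) * c * ↑(u * w⁻¹)⁻¹ := by
  rw [Units.eq_mul_inv_iff_mul_eq]
  have hb : ↑w⁻¹ * c = b * ↑w⁻¹ := by
    rw [Units.inv_mul_eq_iff_eq_mul, ← mul_assoc, ← hc, Units.mul_inv_cancel_right]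
  calc a * ↑(u * w⁻¹) = a * u * ↑w⁻¹ := by rw [Units.val_mul, mul_assoc]
    _ = u * (b * ↑w⁻¹) := by rw [ha, mul_assoc]
    _ = ↑(u * w⁻¹) * c := by rw [← hb, Units.val_mul, mul_assoc]

theorem isStrictlyPositive_one_sub_of_norm_lt_one {A : Type*} [CStarAlgebra A] [PartialOrder A]
    [StarOrderedRing A] {a : A} (ha : IsSelfAdjoint a) (h : ‖a‖ < 1) :
    IsStrictlyPositive (1 - a) := by
  refine (isStrictlyPositive_algebraMap (A := A) (sub_pos.2 h)).of_le ?_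
  rw [map_sub, map_one]
  exact sub_le_sub_left ha.le_algebraMap_norm_self 1

namespace BlockOperator

section Normed

variable {𝕜 : Type*} [NontriviallyNormedField 𝕜]
  {E F : Type*} [NormedAddCommGroup E] [NormedSpace 𝕜 E] [NormedAddCommGroup F] [NormedSpace 𝕜 F]

noncomputable def fromBlocks (P : E →L[𝕜] E) (Q : F →L[𝕜] E) (R : E →L[𝕜] F) (S : F →L[𝕜] F) :
    WithLp 2 (E × F) →L[𝕜] WithLp 2 (E × F) :=
  ((WithLp.prodContinuousLinearEquiv 2 𝕜 E F).symm : E × F →L[𝕜] WithLp 2 (E × F)) ∘L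
    (P.coprod Q).prod (R.coprod S) ∘L
    (WithLp.prodContinuousLinearEquiv 2 𝕜 E F : WithLp 2 (E × F) →L[𝕜] E × F)

variable {P P' : E →L[𝕜] E} {Q Q' : F →L[𝕜] E} {R R' : E →L[𝕜] F} {S S' : F →L[𝕜] F}

@[simp]
theorem fromBlocks_toLp (x : E) (y : F) :
    fromBlocks P Q R S (WithLp.toLp 2 (x, y)) = WithLp.toLp 2 (P x + Q y, R x + S y) :=
  rfl

@[simp]
theorem fst_fromBlocks (x : WithLp 2 (E × F)) : (fromBlocks P Q R S x).fst = P x.fst + Q x.snd :=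
  rfl

@[simp]
theorem snd_fromBlocks (x : WithLp 2 (E × F)) : (fromBlocks P Q R S x).snd = R x.fst + S x.snd :=
  rfl

theorem fromBlocks_comp_fromBlocks :
    fromBlocks P Q R S ∘L fromBlocks P' Q' R' S' =
      fromBlocks (P ∘L P' + Q ∘L R') (P ∘L Q' + Q ∘L S') (R ∘L P' + S ∘L R')
        (R ∘L Q' + S ∘L S') := by
  ext x : 1
  refine (WithLp.ext_iff _).2 (Prod.ext ?_ ?_) <;>
    simp only [WithLp.ofLp_fst, WithLp.ofLp_snd, coe_comp, Function.comp_apply, fst_fromBlocks,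
      snd_fromBlocks, add_apply, map_add] <;> abel

theorem fromBlocks_one : fromBlocks (1 : E →L[𝕜] E) 0 0 (1 : F →L[𝕜] F) = 1 := by
  ext x : 1
  refine (WithLp.ext_iff _).2 (Prod.ext ?_ ?_) <;> simp

theorem fromBlocks_diagonal_mul_fromBlocks_diagonal :
    fromBlocks P 0 0 S * fromBlocks P' 0 0 S' = fromBlocks (P * P') 0 0 (S * S') := by
  ext x : 1
  refine (WithLp.ext_iff _).2 (Prod.ext ?_ ?_) <;> simp

theorem norm_fromBlocks_zero_zero_le (Q : F →L[𝕜] E) (R : E →L[𝕜] F) :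
    ‖fromBlocks 0 Q R 0‖ ≤ max ‖Q‖ ‖R‖ := by
  refine opNorm_le_bound _ (by positivity) fun x => ?_
  have hQ : ‖Q x.snd‖ ≤ max ‖Q‖ ‖R‖ * ‖x.snd‖ :=
    (le_opNorm Q _).trans (by gcongr; exact le_max_left _ _)
  have hR : ‖R x.fst‖ ≤ max ‖Q‖ ‖R‖ * ‖x.fst‖ :=
    (le_opNorm R _).trans (by gcongr; exact le_max_right _ _)
  refine le_of_sq_le_sq ?_ (by positivity)
  rw [WithLp.prod_norm_sq_eq_of_L2, mul_pow, WithLp.prod_norm_sq_eq_of_L2]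
  simp only [fst_fromBlocks, snd_fromBlocks, zero_apply, zero_add, add_zero]
  nlinarith [norm_nonneg (Q x.snd), norm_nonneg (R x.fst)]

theorem isUnit_fromBlocks_one_one [CompleteSpace E] [CompleteSpace F] (hQ : ‖Q‖ < 1)
    (hR : ‖R‖ < 1) : IsUnit (fromBlocks 1 Q R 1) := by
  have h : fromBlocks 1 Q R 1 = 1 - fromBlocks 0 (-Q) (-R) 0 := by
    ext x : 1
    refine (WithLp.ext_iff _).2 (Prod.ext ?_ ?_) <;> simp [add_comm]
  rw [h]
  refine isUnit_one_sub_of_norm_lt_one ((norm_fromBlocks_zero_zero_le _ _).trans_lt ?_)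
  simpa using And.intro hQ hR

theorem isUnit_fromBlocks_diagonal (hP : IsUnit P) (hS : IsUnit S) :
    IsUnit (fromBlocks P 0 0 S) := by
  obtain ⟨p, rfl⟩ := hP
  obtain ⟨s, rfl⟩ := hS
  refine ⟨⟨fromBlocks p 0 0 s, fromBlocks ↑p⁻¹ 0 0 ↑s⁻¹, ?_, ?_⟩, rfl⟩ <;>
    simp [fromBlocks_diagonal_mul_fromBlocks_diagonal, fromBlocks_one]

end Normed

section Inner

variable {𝕜 : Type*} [RCLike 𝕜]
  {E F : Type*} [NormedAddCommGroup E] [InnerProductSpace 𝕜 E] [CompleteSpace E]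
  [NormedAddCommGroup F] [InnerProductSpace 𝕜 F] [CompleteSpace F]

theorem adjoint_fromBlocks (P : E →L[𝕜] E) (Q : F →L[𝕜] E) (R : E →L[𝕜] F) (S : F →L[𝕜] F) :
    (fromBlocks P Q R S)† = fromBlocks (P†) (R†) (Q†) (S†) := by
  refine ((eq_adjoint_iff _ _).2 fun x y => ?_).symm
  simp only [WithLp.prod_inner_apply, WithLp.ofLp_fst, WithLp.ofLp_snd, fst_fromBlocks,
    snd_fromBlocks, inner_add_left, inner_add_right, adjoint_inner_left]
  ring

theorem _root_.IsSelfAdjoint.fromBlocks_diagonal {P : E →L[𝕜] E} {S : F →L[𝕜] F}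
    (hP : IsSelfAdjoint P) (hS : IsSelfAdjoint S) : IsSelfAdjoint (fromBlocks P 0 0 S) := by
  rw [isSelfAdjoint_iff, star_eq_adjoint, adjoint_fromBlocks, hP.adjoint_eq, hS.adjoint_eq,
    map_zero, map_zero]

end Inner

end BlockOperator

open BlockOperator

section Riccati

variable {𝕜 : Type*} [RCLike 𝕜]
  {E F : Type*} [NormedAddCommGroup E] [InnerProductSpace 𝕜 E] [CompleteSpace E]
  [NormedAddCommGroup F] [InnerProductSpace 𝕜 F] [CompleteSpace F]

def IsRiccatiSolution (A0 : E →L[𝕜] E) (A1 : F →L[𝕜] F) (B : F →L[𝕜] E) (K : E →L[𝕜] F) :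
    Prop :=
  K ∘L A0 - A1 ∘L K + (K ∘L B) ∘L K = -B†

variable {A0 : E →L[𝕜] E} {A1 : F →L[𝕜] F} {B : F →L[𝕜] E} {K : E →L[𝕜] F}

namespace IsRiccatiSolution

theorem adjoint (hA0 : IsSelfAdjoint A0) (hA1 : IsSelfAdjoint A1)
    (hK : IsRiccatiSolution A0 A1 B K) :
    IsRiccatiSolution A1 A0 (-B†) (K†) := by
  have h := congrArg (·†) hK
  simp only [map_sub, map_add, map_neg, adjoint_comp, adjoint_adjoint, hA0.adjoint_eq,
    hA1.adjoint_eq] at h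
  unfold IsRiccatiSolution
  simp only [map_neg, adjoint_adjoint, neg_neg, comp_neg, neg_comp, comp_assoc] at h ⊢
  linear_combination (norm := abel1) -h

theorem fromBlocks_comp_fromBlocks_one_one (hA0 : IsSelfAdjoint A0) (hA1 : IsSelfAdjoint A1)
    (hK : IsRiccatiSolution A0 A1 B K) :
    fromBlocks A0 B (-B†) A1 ∘L fromBlocks 1 (K†) K 1 =
      fromBlocks 1 (K†) K 1 ∘L fromBlocks (A0 + B ∘L K) 0 0 (A1 + (-B†) ∘L K†) := by
  have hK' := hK.adjoint hA0 hA1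
  unfold IsRiccatiSolution at hK hK'
  simp only [map_neg, adjoint_adjoint, neg_neg, comp_neg, neg_comp] at hK'
  simp only [fromBlocks_comp_fromBlocks, one_def, comp_id, id_comp, comp_zero,
    add_zero, zero_add, comp_add, neg_comp, comp_neg, comp_assoc] at hK hK' ⊢
  congr 1
  · linear_combination (norm := abel1) -hK'
  · linear_combination (norm := abel1) -hK
  · abel

theorem adjoint_comp_one_sub_eq (hA0 : IsSelfAdjoint A0) (hA1 : IsSelfAdjoint A1)
    (hK : IsRiccatiSolution A0 A1 B K) :
    (A0 + B ∘L K)† ∘L (1 - K† ∘L K) = (1 - K† ∘L K) ∘L (A0 + B ∘L K) := by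
  have hK' := hK.adjoint hA0 hA1
  unfold IsRiccatiSolution at hK hK'
  have e1 := congrArg (K† ∘L ·) hK
  have e2 := congrArg (· ∘L K) hK'
  simp only [map_add, map_neg, adjoint_comp, adjoint_adjoint, neg_neg, hA0.adjoint_eq, comp_add,
    add_comp, comp_sub, sub_comp, comp_neg, neg_comp, comp_assoc, one_def, id_comp,
    comp_id] at e1 e2 ⊢
  linear_combination (norm := abel1) e1 + e2

end IsRiccatiSolution

end Riccati

section Complex

variable {E F : Type*} [NormedAddCommGroup E] [InnerProductSpace ℂ E] [CompleteSpace E]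
  [NormedAddCommGroup F] [InnerProductSpace ℂ F] [CompleteSpace F]
  {A0 : E →L[ℂ] E} {A1 : F →L[ℂ] F} {B : F →L[ℂ] E} {K : E →L[ℂ] F}

theorem IsRiccatiSolution.exists_isSelfAdjoint_units_conj (hA0 : IsSelfAdjoint A0)
    (hA1 : IsSelfAdjoint A1) (hK : IsRiccatiSolution A0 A1 B K) (hKnorm : ‖K‖ < 1) :
    ∃ s : (E →L[ℂ] E)ˣ, IsSelfAdjoint (↑s * (A0 + B ∘L K) * ↑s⁻¹) := by
  have hc : IsStrictlyPositive (1 - K† ∘L K) := by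
    refine isStrictlyPositive_one_sub_of_norm_lt_one
      (isPositive_adjoint_comp_self K).isSelfAdjoint ?_
    rw [norm_adjoint_comp_self]
    nlinarith [norm_nonneg K]
  refine ⟨(hc.isUnit_cfcSqrt).unit, isSelfAdjoint_units_conj_of_star_mul_eq
    (IsSelfAdjoint.of_nonneg (CFC.sqrt_nonneg _)) ?_⟩
  rw [IsUnit.unit_spec, CFC.sqrt_mul_sqrt_self _ hc.nonneg]
  exact hK.adjoint_comp_one_sub_eq hA0 hA1

end Complex

/-- Bounded-operator version of Theorem 5.2 (i) of the paper: let `A0`, `A1` be bounded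
self-adjoint operators, `B : H1 → H0` bounded, and let `L` be the `J`-self-adjoint block
operator matrix `L(x0,x1) = (A0 x0 + B x1, -B* x0 + A1 x1)` on the Hilbert direct sum
`H = H0 ⊕ H1`. If the Riccati equation `K A0 - A1 K + K B K = -B*` has a strictly
contractive bounded solution `K` (`‖K‖ < 1`), then the spectrum of `L` is real and `L` is
similar to a bounded self-adjoint operator `Λ` which can be chosen block diagonal
(leaving `H0 ⊕ {0}` and `{0} ⊕ H1` invariant). -/
theorem J_selfAdjoint_block_similar_to_selfAdjoint
    {H0 : Type*} [NormedAddCommGroup H0] [InnerProductSpace ℂ H0] [CompleteSpace H0]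
    {H1 : Type*} [NormedAddCommGroup H1] [InnerProductSpace ℂ H1] [CompleteSpace H1]
    (A0 : H0 →L[ℂ] H0) (A1 : H1 →L[ℂ] H1) (B : H1 →L[ℂ] H0)
    (hA0 : IsSelfAdjoint A0) (hA1 : IsSelfAdjoint A1)
    (L : WithLp 2 (H0 × H1) →L[ℂ] WithLp 2 (H0 × H1))
    (hL : ∀ (x0 : H0) (x1 : H1),
      L ((WithLp.equiv 2 (H0 × H1)).symm (x0, x1)) =
        (WithLp.equiv 2 (H0 × H1)).symm (A0 x0 + B x1, -(adjoint B) x0 + A1 x1))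
    (K : H0 →L[ℂ] H1) (hKnorm : ‖K‖ < 1)
    (hK : K ∘L A0 - A1 ∘L K + (K ∘L B) ∘L K = -(adjoint B)) :
    (∀ z ∈ spectrum ℂ L, z.im = 0) ∧
    ∃ (T : WithLp 2 (H0 × H1) ≃L[ℂ] WithLp 2 (H0 × H1))
      (Λ : WithLp 2 (H0 × H1) →L[ℂ] WithLp 2 (H0 × H1)),
      IsSelfAdjoint Λ ∧
      (∀ x : WithLp 2 (H0 × H1), L x = T (Λ (T.symm x))) ∧
      (∀ x0 : H0, ∃ y0 : H0,
        Λ ((WithLp.equiv 2 (H0 × H1)).symm (x0, 0)) =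
          (WithLp.equiv 2 (H0 × H1)).symm (y0, 0)) ∧
      (∀ x1 : H1, ∃ y1 : H1,
        Λ ((WithLp.equiv 2 (H0 × H1)).symm (0, x1)) =
          (WithLp.equiv 2 (H0 × H1)).symm (0, y1)) := by
  have hL_blocks : L = fromBlocks A0 B (-B†) A1 := by
    ext ⟨x0, x1⟩ : 1
    exact hL x0 x1
  replace hK : IsRiccatiSolution A0 A1 B K := hK
  have hK'norm : ‖K†‖ < 1 := by rwa [LinearIsometryEquiv.norm_map]
  obtain ⟨s0, hΛ0⟩ := hK.exists_isSelfAdjoint_units_conj hA0 hA1 hKnorm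
  obtain ⟨s1, hΛ1⟩ := (hK.adjoint hA0 hA1).exists_isSelfAdjoint_units_conj hA1 hA0 hK'norm
  obtain ⟨v, hv⟩ := isUnit_fromBlocks_one_one hK'norm hKnorm
  obtain ⟨d, hd⟩ := isUnit_fromBlocks_diagonal s0.isUnit s1.isUnit
  set Z0 := A0 + B ∘L K
  set Z1 := A1 + (-B†) ∘L K†
  set Λ : WithLp 2 (H0 × H1) →L[ℂ] WithLp 2 (H0 × H1) :=
    fromBlocks (↑s0 * Z0 * ↑s0⁻¹) 0 0 (↑s1 * Z1 * ↑s1⁻¹)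
  have hLv : L * v = v * fromBlocks Z0 0 0 Z1 := by
    rw [hL_blocks, hv]
    exact hK.fromBlocks_comp_fromBlocks_one_one hA0 hA1
  have hΛd : Λ * d = d * fromBlocks Z0 0 0 Z1 := by
    simp only [Λ, hd, fromBlocks_diagonal_mul_fromBlocks_diagonal, mul_assoc, Units.inv_mul,
      mul_one]
  have hΛ : IsSelfAdjoint Λ := hΛ0.fromBlocks_diagonal hΛ1
  have hsim := eq_units_conj_of_mul_eq_mul hLv hΛd
  refine ⟨fun z hz => ?_, ContinuousLinearEquiv.unitsEquiv ℂ _ (v * d⁻¹), Λ, hΛ,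
    fun x => by rw [hsim]; rfl,
    fun x0 => ⟨(↑s0 * Z0 * ↑s0⁻¹ : H0 →L[ℂ] H0) x0, by simp [Λ]⟩,
    fun x1 => ⟨(↑s1 * Z1 * ↑s1⁻¹ : H1 →L[ℂ] H1) x1, by simp [Λ]⟩⟩
  rw [hsim, spectrum.units_conjugate] at hz
  exact hΛ.im_eq_zero_of_mem_spectrum hz
end

section
/- Let H0 and H1 be complex Hilbert spaces, let A0 on H0 and A1 on H1 be bounded self-adjoint operators, let B : H1 → H0 be a bounded operator, and let L be the block operator matrix on H = H0 ⊕ H1 given by L(x0,x1) = (A0 x0 + B x1, −B* x0 + A1 x1). Let J be the involution J(x0,x1) = (x0,−x1) on H. Suppose the bounded operator K : H0 → H1 with ‖K‖ < 1 satisfies K A0 − A1 K + K B K = −B*. Then: (a) the graph subspaces G(K) = {(x0, K x0)} and G*(K) = {(K* x1, x1)} are invariant under L; (b) G(K) and G*(K) are orthogonal with respect to the indefinite inner product [u,v] := ⟪J u, v⟫, i.e. ⟪J u, v⟫ = 0 for all u ∈ G(K), v ∈ G*(K); (c) with γ := (1 − ‖K‖²)/(1 + ‖K‖²) > 0, one has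 Re⟪J u, u⟫ ≥ γ·‖u‖² for all u ∈ G(K) and Re⟪J v, v⟫ ≤ −γ·‖v‖² for all v ∈ G*(K) (so G(K) is uniformly positive and G*(K) uniformly negative in the Krein space sense). (Bounded-operator version of Theorem 5.2 (ii) of the paper.) -/
open ContinuousLinearMap

/-!
Writing the Riccati equation as `K (A0 x + B K x) = -B* x + A1 K x` says exactly that `L` maps
`(x, K x)` to the graph point over `A0 x + B K x`. Its adjoint is, by self-adjointness of `A0`
and `A1`, again a Riccati equation (for `K*`, with `A0, A1` swapped and `B` replaced by `-B*`),
which gives the invariance of `G*(K)` in the same way. On a point `(x0, x1)` one has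
`Re⟪J (x0, x1), (x0, x1)⟫ = ‖x0‖² - ‖x1‖²`; on `G(K)`, `‖x1‖² ≤ k² ‖x0‖²` with `k = ‖K‖`
(on `G*(K)` the roles are swapped, as `‖K*‖ = ‖K‖`), and
`(1 - k²)(‖x0‖² + ‖x1‖²) ≤ (1 + k²)(‖x0‖² - ‖x1‖²)` is equivalent to that bound.
-/

section Riccati

variable {𝕜 E F : Type*} [NontriviallyNormedField 𝕜]
  [NormedAddCommGroup E] [NormedSpace 𝕜 E] [NormedAddCommGroup F] [NormedSpace 𝕜 F]

theorem apply_add_of_riccati {K : E →L[𝕜] F} {A0 : E →L[𝕜] E} {A1 : F →L[𝕜] F}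
    {B : F →L[𝕜] E} {C : E →L[𝕜] F} (hK : K ∘L A0 - A1 ∘L K + (K ∘L B) ∘L K = C) (x : E) :
    K (A0 x + B (K x)) = C x + A1 (K x) := by
  rw [← hK]
  simp only [add_apply, sub_apply, comp_apply, map_add]
  abel

end Riccati

theorem mul_add_le_sub_of_le_sq_mul {k a b : ℝ} (hb : b ≤ k ^ 2 * a) :
    (1 - k ^ 2) / (1 + k ^ 2) * (a + b) ≤ a - b := by
  have hden : 0 < 1 + k ^ 2 := by positivity
  rw [div_mul_eq_mul_div, div_le_iff₀ hden]
  nlinarith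

section Graphs

variable {𝕜 E F : Type*} [RCLike 𝕜]
  [NormedAddCommGroup E] [InnerProductSpace 𝕜 E] [NormedAddCommGroup F] [InnerProductSpace 𝕜 F]

def graphL2 (K : E →L[𝕜] F) : Set (WithLp 2 (E × F)) :=
  {x | ∃ x0 : E, x = (WithLp.equiv 2 (E × F)).symm (x0, K x0)}

def adjointGraphL2 [CompleteSpace E] [CompleteSpace F] (K : E →L[𝕜] F) :
    Set (WithLp 2 (E × F)) :=
  {x | ∃ x1 : F, x = (WithLp.equiv 2 (E × F)).symm ((adjoint K) x1, x1)}

theorem norm_sq_equiv_symm (x0 : E) (x1 : F) :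
    ‖(WithLp.equiv 2 (E × F)).symm (x0, x1)‖ ^ 2 = ‖x0‖ ^ 2 + ‖x1‖ ^ 2 := by
  simp [WithLp.prod_norm_sq_eq_of_L2]

theorem adjoint_riccati [CompleteSpace E] [CompleteSpace F] {K : E →L[𝕜] F} {A0 : E →L[𝕜] E}
    {A1 : F →L[𝕜] F} {B : F →L[𝕜] E} (hA0 : IsSelfAdjoint A0) (hA1 : IsSelfAdjoint A1)
    (hK : K ∘L A0 - A1 ∘L K + (K ∘L B) ∘L K = -(adjoint B)) :
    adjoint K ∘L A1 - A0 ∘L adjoint K + (adjoint K ∘L (-(adjoint B))) ∘L adjoint K = B := by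
  have h := congrArg adjoint hK
  simp only [map_add, map_sub, map_neg, adjoint_comp, adjoint_adjoint, hA0.adjoint_eq,
    hA1.adjoint_eq] at h
  refine Eq.trans ?_ (neg_eq_iff_eq_neg.mpr h)
  simp only [comp_neg, neg_comp]
  abel

theorem mapsTo_graphL2 {K : E →L[𝕜] F} {A0 : E →L[𝕜] E} {A1 : F →L[𝕜] F} {B : F →L[𝕜] E}
    {C : E →L[𝕜] F} {L : WithLp 2 (E × F) →L[𝕜] WithLp 2 (E × F)}
    (hL : ∀ (x0 : E) (x1 : F), L ((WithLp.equiv 2 (E × F)).symm (x0, x1)) =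
      (WithLp.equiv 2 (E × F)).symm (A0 x0 + B x1, C x0 + A1 x1))
    (hK : K ∘L A0 - A1 ∘L K + (K ∘L B) ∘L K = C) :
    Set.MapsTo L (graphL2 K) (graphL2 K) := by
  rintro _ ⟨x0, rfl⟩
  refine ⟨A0 x0 + B (K x0), ?_⟩
  rw [hL, apply_add_of_riccati hK]

theorem mapsTo_adjointGraphL2 [CompleteSpace E] [CompleteSpace F] {K : E →L[𝕜] F}
    {A0 : E →L[𝕜] E} {A1 : F →L[𝕜] F} {B : F →L[𝕜] E}
    {L : WithLp 2 (E × F) →L[𝕜] WithLp 2 (E × F)}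
    (hL : ∀ (x0 : E) (x1 : F), L ((WithLp.equiv 2 (E × F)).symm (x0, x1)) =
      (WithLp.equiv 2 (E × F)).symm (A0 x0 + B x1, -(adjoint B) x0 + A1 x1))
    (hA0 : IsSelfAdjoint A0) (hA1 : IsSelfAdjoint A1)
    (hK : K ∘L A0 - A1 ∘L K + (K ∘L B) ∘L K = -(adjoint B)) :
    Set.MapsTo L (adjointGraphL2 K) (adjointGraphL2 K) := by
  rintro _ ⟨x1, rfl⟩
  refine ⟨-(adjoint B) (adjoint K x1) + A1 x1, ?_⟩
  have hK' := adjoint_riccati hA0 hA1 hK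
  have h := apply_add_of_riccati hK' x1
  rw [neg_apply, add_comm (A1 x1), add_comm (B x1)] at h
  rw [hL, h]

variable {J : WithLp 2 (E × F) →L[𝕜] WithLp 2 (E × F)}

theorem inner_fundamentalSymmetry_equiv_symm
    (hJ : ∀ (x0 : E) (x1 : F), J ((WithLp.equiv 2 (E × F)).symm (x0, x1)) =
      (WithLp.equiv 2 (E × F)).symm (x0, -x1)) (x0 y0 : E) (x1 y1 : F) :
    inner 𝕜 (J ((WithLp.equiv 2 (E × F)).symm (x0, x1))) ((WithLp.equiv 2 (E × F)).symm (y0, y1))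
      = inner 𝕜 x0 y0 - inner 𝕜 x1 y1 := by
  rw [hJ]
  simp [WithLp.prod_inner_apply, sub_eq_add_neg]

theorem re_inner_fundamentalSymmetry_self
    (hJ : ∀ (x0 : E) (x1 : F), J ((WithLp.equiv 2 (E × F)).symm (x0, x1)) =
      (WithLp.equiv 2 (E × F)).symm (x0, -x1)) (x0 : E) (x1 : F) :
    RCLike.re (inner 𝕜 (J ((WithLp.equiv 2 (E × F)).symm (x0, x1)))
      ((WithLp.equiv 2 (E × F)).symm (x0, x1))) = ‖x0‖ ^ 2 - ‖x1‖ ^ 2 := by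
  rw [inner_fundamentalSymmetry_equiv_symm hJ, map_sub, inner_self_eq_norm_sq,
    inner_self_eq_norm_sq]

theorem inner_fundamentalSymmetry_eq_zero [CompleteSpace E] [CompleteSpace F]
    {K : E →L[𝕜] F}
    (hJ : ∀ (x0 : E) (x1 : F), J ((WithLp.equiv 2 (E × F)).symm (x0, x1)) =
      (WithLp.equiv 2 (E × F)).symm (x0, -x1))
    {u v : WithLp 2 (E × F)} (hu : u ∈ graphL2 K) (hv : v ∈ adjointGraphL2 K) :
    inner 𝕜 (J u) v = 0 := by
  obtain ⟨x0, rfl⟩ := hu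
  obtain ⟨x1, rfl⟩ := hv
  rw [inner_fundamentalSymmetry_equiv_symm hJ, adjoint_inner_right, sub_self]

theorem le_re_inner_fundamentalSymmetry_of_mem_graphL2 {K : E →L[𝕜] F}
    (hJ : ∀ (x0 : E) (x1 : F), J ((WithLp.equiv 2 (E × F)).symm (x0, x1)) =
      (WithLp.equiv 2 (E × F)).symm (x0, -x1))
    {u : WithLp 2 (E × F)} (hu : u ∈ graphL2 K) :
    (1 - ‖K‖ ^ 2) / (1 + ‖K‖ ^ 2) * ‖u‖ ^ 2 ≤ RCLike.re (inner 𝕜 (J u) u) := by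
  obtain ⟨x0, rfl⟩ := hu
  rw [re_inner_fundamentalSymmetry_self hJ, norm_sq_equiv_symm]
  refine mul_add_le_sub_of_le_sq_mul ?_
  rw [← mul_pow]
  gcongr
  exact K.le_opNorm x0

theorem re_inner_fundamentalSymmetry_le_of_mem_adjointGraphL2 [CompleteSpace E]
    [CompleteSpace F] {K : E →L[𝕜] F}
    (hJ : ∀ (x0 : E) (x1 : F), J ((WithLp.equiv 2 (E × F)).symm (x0, x1)) =
      (WithLp.equiv 2 (E × F)).symm (x0, -x1))
    {v : WithLp 2 (E × F)} (hv : v ∈ adjointGraphL2 K) :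
    RCLike.re (inner 𝕜 (J v) v) ≤ -((1 - ‖K‖ ^ 2) / (1 + ‖K‖ ^ 2)) * ‖v‖ ^ 2 := by
  obtain ⟨x1, rfl⟩ := hv
  rw [re_inner_fundamentalSymmetry_self hJ, norm_sq_equiv_symm,
    add_comm (‖adjoint K x1‖ ^ 2), neg_mul, le_neg, neg_sub]
  refine mul_add_le_sub_of_le_sq_mul ?_
  rw [← mul_pow, ← adjoint.norm_map K]
  gcongr
  exact (adjoint K).le_opNorm x1

end Graphs

/-- Bounded-operator version of Theorem 5.2 (ii) of the paper: let `A0`, `A1` be bounded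
self-adjoint operators, `B : H1 → H0` bounded, `L(x0,x1) = (A0 x0 + B x1, -B* x0 + A1 x1)`
the block operator matrix on `H = H0 ⊕ H1`, and `J(x0,x1) = (x0, -x1)`. If `K : H0 → H1`
with `‖K‖ < 1` solves `K A0 - A1 K + K B K = -B*`, then the graphs
`G(K) = {(x0, K x0)}` and `G*(K) = {(K* x1, x1)}` are invariant under `L`, mutually
orthogonal w.r.t. the indefinite inner product `[u,v] = ⟪J u, v⟫`, and with
`γ = (1-‖K‖²)/(1+‖K‖²) > 0` one has `Re⟪J u, u⟫ ≥ γ‖u‖²` on `G(K)` and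
`Re⟪J v, v⟫ ≤ -γ‖v‖²` on `G*(K)`. -/
theorem J_selfAdjoint_graph_subspaces_Krein
    {H0 : Type*} [NormedAddCommGroup H0] [InnerProductSpace ℂ H0] [CompleteSpace H0]
    {H1 : Type*} [NormedAddCommGroup H1] [InnerProductSpace ℂ H1] [CompleteSpace H1]
    (A0 : H0 →L[ℂ] H0) (A1 : H1 →L[ℂ] H1) (B : H1 →L[ℂ] H0)
    (hA0 : IsSelfAdjoint A0) (hA1 : IsSelfAdjoint A1)
    (L : WithLp 2 (H0 × H1) →L[ℂ] WithLp 2 (H0 × H1))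
    (hL : ∀ (x0 : H0) (x1 : H1),
      L ((WithLp.equiv 2 (H0 × H1)).symm (x0, x1)) =
        (WithLp.equiv 2 (H0 × H1)).symm (A0 x0 + B x1, -(adjoint B) x0 + A1 x1))
    (J : WithLp 2 (H0 × H1) →L[ℂ] WithLp 2 (H0 × H1))
    (hJ : ∀ (x0 : H0) (x1 : H1),
      J ((WithLp.equiv 2 (H0 × H1)).symm (x0, x1)) =
        (WithLp.equiv 2 (H0 × H1)).symm (x0, -x1))
    (K : H0 →L[ℂ] H1) (hKnorm : ‖K‖ < 1)
    (hK : K ∘L A0 - A1 ∘L K + (K ∘L B) ∘L K = -(adjoint B)) :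
    (∀ u ∈ {x : WithLp 2 (H0 × H1) | ∃ x0 : H0,
        x = (WithLp.equiv 2 (H0 × H1)).symm (x0, K x0)},
      L u ∈ {x : WithLp 2 (H0 × H1) | ∃ x0 : H0,
        x = (WithLp.equiv 2 (H0 × H1)).symm (x0, K x0)}) ∧
    (∀ v ∈ {x : WithLp 2 (H0 × H1) | ∃ x1 : H1,
        x = (WithLp.equiv 2 (H0 × H1)).symm ((adjoint K) x1, x1)},
      L v ∈ {x : WithLp 2 (H0 × H1) | ∃ x1 : H1,
        x = (WithLp.equiv 2 (H0 × H1)).symm ((adjoint K) x1, x1)}) ∧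
    (∀ u ∈ {x : WithLp 2 (H0 × H1) | ∃ x0 : H0,
        x = (WithLp.equiv 2 (H0 × H1)).symm (x0, K x0)},
      ∀ v ∈ {x : WithLp 2 (H0 × H1) | ∃ x1 : H1,
        x = (WithLp.equiv 2 (H0 × H1)).symm ((adjoint K) x1, x1)},
      (inner ℂ (J u) v : ℂ) = 0) ∧
    ((0 : ℝ) < (1 - ‖K‖ ^ 2) / (1 + ‖K‖ ^ 2) ∧
      (∀ u ∈ {x : WithLp 2 (H0 × H1) | ∃ x0 : H0,
          x = (WithLp.equiv 2 (H0 × H1)).symm (x0, K x0)},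
        (1 - ‖K‖ ^ 2) / (1 + ‖K‖ ^ 2) * ‖u‖ ^ 2 ≤ (inner ℂ (J u) u : ℂ).re) ∧
      (∀ v ∈ {x : WithLp 2 (H0 × H1) | ∃ x1 : H1,
          x = (WithLp.equiv 2 (H0 × H1)).symm ((adjoint K) x1, x1)},
        (inner ℂ (J v) v : ℂ).re ≤ -((1 - ‖K‖ ^ 2) / (1 + ‖K‖ ^ 2)) * ‖v‖ ^ 2)) := by
  have hγ : 0 < (1 - ‖K‖ ^ 2) / (1 + ‖K‖ ^ 2) := by
    have : ‖K‖ ^ 2 < 1 := pow_lt_one₀ (norm_nonneg K) hKnorm two_ne_zero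
    exact div_pos (by linarith) (by positivity)
  exact ⟨fun u hu => mapsTo_graphL2 hL hK hu,
    fun v hv => mapsTo_adjointGraphL2 hL hA0 hA1 hK hv,
    fun u hu v hv => inner_fundamentalSymmetry_eq_zero hJ hu hv, hγ,
    fun u hu => le_re_inner_fundamentalSymmetry_of_mem_graphL2 hJ hu,
    fun v hv => re_inner_fundamentalSymmetry_le_of_mem_adjointGraphL2 hJ hv⟩
end

section
/- Let H0 and H1 be complex Hilbert spaces and let A0 on H0 and A1 on H1 be bounded self-adjoint operators whose spectra are disjoint, with d := dist(spectrum(A0), spectrum(A1)) > 0. Let B : H1 → H0 be a bounded operator with ‖B‖ < d/2, and let L be the block operator matrix on H = H0 ⊕ H1 given by L(x0,x1) = (A0 x0 + B x1, −B* x0 + A1 x1). Then the spectrum of L is real: spectrum(L) ⊆ ℝ, i.e. every spectral point of L has zero imaginary part. (Theorem 5.10 of the paper; note that no assumption on the mutual position of spectrum(A0) and spectrum(A1) beyond disjointness at distance d is made, and the bound d/2 on ‖B‖ is sharp.) -/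
/-!
For nonreal `z` we show that `z - L` is invertible. With `J = diag(1, -1)` the operator `J L` is
self-adjoint, so `Im z · (‖x₀‖² - ‖x₁‖²) = Im ⟪J u, (z - L) u⟫`: an approximate eigenvector
`u = (x₀, x₁)` of `L` at `z` has `‖x₀‖ ≈ ‖x₁‖`. On the other hand the two rows of
`(z - L) u ≈ 0` give `dist(z, σ(Aᵢ)) ‖xᵢ‖ ≲ ‖B‖ ‖x₁₋ᵢ‖`, and the two distances add up to at
least `d`, which forces `d ≤ 2 ‖B‖`. Made quantitative, this bounds `z - L` below; the adjoint
`z̄ - L†` is of the same block form with `-B` in place of `B`, so it is bounded below too, and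
`z - L` is invertible.
-/

open ContinuousLinearMap

/-- The scalar core of the lower bound, with `a = ‖x₀‖`, `b = ‖x₁‖`, `n = ‖u‖`, `y = |Im z|`,
`β = ‖B‖`, `δᵢ = dist(z, σ(Aᵢ))` and `ε = ‖(z - L) u‖`. -/
theorem scalar_block_estimate {a b n y β d δ₀ δ₁ ε : ℝ} (ha : 0 ≤ a) (hb : 0 ≤ b) (hy : 0 ≤ y)
    (hβ : 0 ≤ β) (hβd : 2 * β ≤ d) (hδ₀ : 0 ≤ δ₀) (hδ₁ : 0 ≤ δ₁) (hn : n ≤ a + b) (hd : d ≤ δ₀ + δ₁)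
    (him : y * |a ^ 2 - b ^ 2| ≤ (a + b) * ε)
    (h₀ : δ₀ * a ≤ ε + β * b) (h₁ : δ₁ * b ≤ ε + β * a) :
    (d - 2 * β) * y * n ≤ (d + 4 * y) * ε := by
  wlog hab : a ≤ b generalizing a b δ₀ δ₁
  · refine this hb ha hδ₁ hδ₀ (by linarith) (by linarith) ?_ h₁ h₀ (by linarith)
    rwa [abs_sub_comm, add_comm b]
  rcases (add_nonneg ha hb).eq_or_lt with hab0 | hab0
  · obtain ⟨rfl, rfl⟩ : a = 0 ∧ b = 0 := ⟨by linarith, by linarith⟩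
    nlinarith [mul_nonneg (sub_nonneg.2 hβd) hy]
  have hgap : y * (b - a) ≤ ε := by
    rw [show a ^ 2 - b ^ 2 = -((b - a) * (a + b)) by ring, abs_neg,
      abs_of_nonneg (by nlinarith)] at him
    nlinarith
  have hda : d * a ≤ 2 * ε + β * (a + b) := by nlinarith [mul_le_mul_of_nonneg_left hab hδ₁]
  calc (d - 2 * β) * y * n ≤ (d - 2 * β) * y * (2 * a + (b - a)) := by
        gcongr
        nlinarith
    _ = 2 * y * ((d - 2 * β) * a) + (d - 2 * β) * (y * (b - a)) := by ring
    _ ≤ 2 * y * (2 * ε + β * (b - a)) + (d - 2 * β) * ε := by gcongr; linarith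
    _ = 4 * y * ε + 2 * β * (y * (b - a)) + (d - 2 * β) * ε := by ring
    _ ≤ 4 * y * ε + 2 * β * ε + (d - 2 * β) * ε := by gcongr
    _ = (d + 4 * y) * ε := by ring

theorem sInf_dist_le_infDist_add_infDist {α : Type*} [PseudoMetricSpace α] (S T : Set α) (w : α) :
    sInf {t : ℝ | ∃ μ ∈ S, ∃ ν ∈ T, t = dist μ ν} ≤ Metric.infDist w S + Metric.infDist w T := by
  rcases S.eq_empty_or_nonempty with rfl | hS
  · simp [Metric.infDist_nonneg]
  rcases T.eq_empty_or_nonempty with rfl | hT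
  · simp [Metric.infDist_nonneg]
  have hbdd : BddBelow {t : ℝ | ∃ μ ∈ S, ∃ ν ∈ T, t = dist μ ν} :=
    ⟨0, by rintro _ ⟨μ, -, ν, -, rfl⟩; exact dist_nonneg⟩
  rw [← sub_le_iff_le_add, Metric.le_infDist hS]
  intro μ hμ
  rw [sub_le_iff_le_add', ← sub_le_iff_le_add, Metric.le_infDist hT]
  intro ν hν
  have := csInf_le hbdd ⟨μ, hμ, ν, hν, rfl⟩
  linarith [dist_triangle_left μ ν w]

theorem isUnit_of_antilipschitz_of_injective_adjoint {𝕜 E : Type*} [RCLike 𝕜]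
    [NormedAddCommGroup E] [InnerProductSpace 𝕜 E] [CompleteSpace E] {T : E →L[𝕜] E}
    {K : NNReal} (hT : AntilipschitzWith K T) (hT' : Function.Injective (adjoint T)) :
    IsUnit T := by
  rw [isUnit_iff_bijective, bijective_iff_dense_range_and_antilipschitz]
  refine ⟨?_, K, hT⟩
  rw [Submodule.topologicalClosure_eq_top_iff, orthogonal_range, LinearMap.ker_eq_bot]
  exact hT'

theorem IsStarNormal.infDist_spectrum_mul_norm_le {E : Type*} [NormedAddCommGroup E]
    [InnerProductSpace ℂ E] [CompleteSpace E] {T : E →L[ℂ] E} [IsStarNormal T] (z : ℂ) (u : E) :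
    Metric.infDist z (spectrum ℂ T) * ‖u‖ ≤ ‖z • u - T u‖ := by
  have hδ₀ : 0 ≤ Metric.infDist z (spectrum ℂ T) := Metric.infDist_nonneg
  rcases hδ₀.eq_or_lt with hδ | hδ
  · rw [← hδ, zero_mul]
    exact norm_nonneg _
  set δ := Metric.infDist z (spectrum ℂ T)
  have hz : ∀ w ∈ spectrum ℂ T, z - w ≠ 0 := fun w hw hzw ↦
    hδ.ne' (Metric.infDist_zero_of_mem (sub_eq_zero.mp hzw ▸ hw))
  -- the resolvent `(z - T)⁻¹`, built by the functional calculus so that its norm is `≤ δ⁻¹`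
  set R := cfc (fun w : ℂ ↦ (z - w)⁻¹) T
  have hR : R * (algebraMap ℂ _ z - T) = 1 := by
    have h : cfc (fun w : ℂ ↦ (z - w)⁻¹ * (z - w)) T = 1 := by
      rw [cfc_congr (g := fun _ ↦ 1) fun w hw ↦ inv_mul_cancel₀ (hz w hw),
        cfc_const_one ℂ T]
    rwa [cfc_mul (fun w ↦ (z - w)⁻¹) (fun w ↦ z - w) T (ContinuousOn.inv₀ (by fun_prop) hz),
      cfc_sub .., cfc_const z T, cfc_id' ℂ T] at h
  have hRu : R (z • u - T u) = u := by
    simpa [Algebra.algebraMap_eq_smul_one] using congr($hR u)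
  have hRnorm : ‖R‖ ≤ δ⁻¹ := by
    refine norm_cfc_le (by positivity) fun w hw ↦ ?_
    rw [norm_inv, ← dist_eq_norm]
    exact inv_anti₀ hδ (Metric.infDist_le_dist_of_mem hw)
  calc δ * ‖u‖ = δ * ‖R (z • u - T u)‖ := by rw [hRu]
    _ ≤ δ * (δ⁻¹ * ‖z • u - T u‖) := by gcongr; exact (R.le_opNorm _).trans (by gcongr)
    _ = ‖z • u - T u‖ := mul_inv_cancel_left₀ hδ.ne' _

section Block

variable {H₀ H₁ : Type*} [NormedAddCommGroup H₀] [InnerProductSpace ℂ H₀] [CompleteSpace H₀]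
  [NormedAddCommGroup H₁] [InnerProductSpace ℂ H₁] [CompleteSpace H₁]

/-- `M` is the block operator matrix `[[A₀, B], [-B†, A₁]]` on `H₀ ⊕ H₁`. -/
def HasBlockForm (A₀ : H₀ →L[ℂ] H₀) (A₁ : H₁ →L[ℂ] H₁) (B : H₁ →L[ℂ] H₀)
    (M : WithLp 2 (H₀ × H₁) →L[ℂ] WithLp 2 (H₀ × H₁)) : Prop :=
  ∀ (x₀ : H₀) (x₁ : H₁), M ((WithLp.equiv 2 (H₀ × H₁)).symm (x₀, x₁)) =
    (WithLp.equiv 2 (H₀ × H₁)).symm (A₀ x₀ + B x₁, -(adjoint B) x₀ + A₁ x₁)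

variable {A₀ : H₀ →L[ℂ] H₀} {A₁ : H₁ →L[ℂ] H₁} {B : H₁ →L[ℂ] H₀}
  {M : WithLp 2 (H₀ × H₁) →L[ℂ] WithLp 2 (H₀ × H₁)}

theorem im_mul_norm_sq_sub_norm_sq_eq (hA₀ : IsSelfAdjoint A₀) (hA₁ : IsSelfAdjoint A₁) (z : ℂ)
    (x₀ : H₀) (x₁ : H₁) :
    z.im * (‖x₀‖ ^ 2 - ‖x₁‖ ^ 2) =
      (inner ℂ x₀ (z • x₀ - (A₀ x₀ + B x₁))).im -
        (inner ℂ x₁ (z • x₁ - (-(adjoint B) x₀ + A₁ x₁))).im := by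
  have hB : inner ℂ x₁ (adjoint B x₀) = starRingEnd ℂ (inner ℂ x₀ (B x₁)) := by
    rw [adjoint_inner_right, inner_conj_symm]
  have h₀ : (inner ℂ x₀ (A₀ x₀)).im = 0 := hA₀.isSymmetric.im_inner_self_apply x₀
  have h₁ : (inner ℂ x₁ (A₁ x₁)).im = 0 := hA₁.isSymmetric.im_inner_self_apply x₁
  simp only [inner_sub_right, inner_add_right, inner_neg_right, inner_smul_right, hB,
    inner_self_eq_norm_sq_to_K, Complex.sub_im, Complex.add_im, Complex.neg_im, Complex.mul_im,
    Complex.conj_im, h₀, h₁]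
  simp only [Complex.coe_algebraMap, ← Complex.ofReal_pow, Complex.ofReal_re, Complex.ofReal_im]
  ring

theorem HasBlockForm.norm_lower_bound (hM : HasBlockForm A₀ A₁ B M) (hA₀ : IsSelfAdjoint A₀)
    (hA₁ : IsSelfAdjoint A₁) {d : ℝ} (hBd : 2 * ‖B‖ ≤ d) {z : ℂ}
    (hd : d ≤ Metric.infDist z (spectrum ℂ A₀) + Metric.infDist z (spectrum ℂ A₁))
    (u : WithLp 2 (H₀ × H₁)) :
    (d - 2 * ‖B‖) * |z.im| * ‖u‖ ≤ (d + 4 * |z.im|) * ‖z • u - M u‖ := by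
  set x₀ := u.fst
  set x₁ := u.snd
  set r := z • u - M u
  have hMu : M u = (WithLp.equiv 2 (H₀ × H₁)).symm (A₀ x₀ + B x₁, -(adjoint B) x₀ + A₁ x₁) :=
    hM x₀ x₁
  have hr₀ : r.fst = z • x₀ - (A₀ x₀ + B x₁) := by simp only [r, hMu]; rfl
  have hr₁ : r.snd = z • x₁ - (-(adjoint B) x₀ + A₁ x₁) := by simp only [r, hMu]; rfl
  have hu : ‖u‖ ≤ ‖x₀‖ + ‖x₁‖ := by
    refine le_of_pow_le_pow_left₀ two_ne_zero (by positivity) ?_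
    rw [WithLp.prod_norm_sq_eq_of_L2]
    nlinarith [norm_nonneg x₀, norm_nonneg x₁]
  have him : |z.im| * |‖x₀‖ ^ 2 - ‖x₁‖ ^ 2| ≤ (‖x₀‖ + ‖x₁‖) * ‖r‖ := by
    rw [← abs_mul, im_mul_norm_sq_sub_norm_sq_eq hA₀ hA₁, ← hr₀, ← hr₁]
    calc _ ≤ ‖inner ℂ x₀ r.fst‖ + ‖inner ℂ x₁ r.snd‖ :=
          (abs_sub _ _).trans (add_le_add (Complex.abs_im_le_norm _) (Complex.abs_im_le_norm _))
      _ ≤ ‖x₀‖ * ‖r‖ + ‖x₁‖ * ‖r‖ := by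
          gcongr
          · exact (norm_inner_le_norm _ _).trans (by gcongr; exact WithLp.norm_fst_le H₀ r)
          · exact (norm_inner_le_norm _ _).trans (by gcongr; exact WithLp.norm_snd_le H₀ r)
      _ = (‖x₀‖ + ‖x₁‖) * ‖r‖ := by ring
  have h₀ : Metric.infDist z (spectrum ℂ A₀) * ‖x₀‖ ≤ ‖r‖ + ‖B‖ * ‖x₁‖ := by
    have := hA₀.isStarNormal
    refine (IsStarNormal.infDist_spectrum_mul_norm_le z x₀).trans ?_
    rw [show z • x₀ - A₀ x₀ = r.fst + B x₁ by rw [hr₀]; abel]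
    exact (norm_add_le _ _).trans (add_le_add (WithLp.norm_fst_le H₀ r) (B.le_opNorm x₁))
  have h₁ : Metric.infDist z (spectrum ℂ A₁) * ‖x₁‖ ≤ ‖r‖ + ‖B‖ * ‖x₀‖ := by
    have := hA₁.isStarNormal
    refine (IsStarNormal.infDist_spectrum_mul_norm_le z x₁).trans ?_
    rw [show z • x₁ - A₁ x₁ = r.snd - adjoint B x₀ by rw [hr₁]; abel, ← adjoint.norm_map B]
    exact (norm_sub_le _ _).trans (add_le_add (WithLp.norm_snd_le H₀ r) ((adjoint B).le_opNorm x₀))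
  exact scalar_block_estimate (norm_nonneg _) (norm_nonneg _) (abs_nonneg _) (norm_nonneg _) hBd
    Metric.infDist_nonneg Metric.infDist_nonneg hu hd him h₀ h₁

theorem HasBlockForm.exists_antilipschitzWith_algebraMap_sub (hM : HasBlockForm A₀ A₁ B M)
    (hA₀ : IsSelfAdjoint A₀) (hA₁ : IsSelfAdjoint A₁) {d : ℝ} (hBd : 2 * ‖B‖ < d) {z : ℂ}
    (hz : z.im ≠ 0)
    (hd : d ≤ Metric.infDist z (spectrum ℂ A₀) + Metric.infDist z (spectrum ℂ A₁)) :
    ∃ K, AntilipschitzWith K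
      (algebraMap ℂ (WithLp 2 (H₀ × H₁) →L[ℂ] WithLp 2 (H₀ × H₁)) z - M) := by
  have hy : 0 < |z.im| := abs_pos.mpr hz
  have hd₂ : 0 < d - 2 * ‖B‖ := by linarith
  have hd₄ : 0 < d + 4 * |z.im| := by linarith [norm_nonneg B]
  refine antilipschitzWith_iff_exists_mul_le_norm.mpr
    ⟨(d - 2 * ‖B‖) * |z.im| / (d + 4 * |z.im|), by positivity, fun u ↦ ?_⟩
  rw [div_mul_eq_mul_div, div_le_iff₀ hd₄, mul_comm _ (d + 4 * |z.im|)]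
  simpa [Algebra.algebraMap_eq_smul_one] using hM.norm_lower_bound hA₀ hA₁ hBd.le hd u

theorem HasBlockForm.adjoint (hM : HasBlockForm A₀ A₁ B M) (hA₀ : IsSelfAdjoint A₀)
    (hA₁ : IsSelfAdjoint A₁) : HasBlockForm A₀ A₁ (-B) (adjoint M) := by
  intro x₀ x₁
  refine ext_inner_left ℂ fun u ↦ ?_
  have e₀ (a b : H₀) : inner ℂ (A₀ a) b = inner ℂ a (A₀ b) := by
    rw [← adjoint_inner_right, hA₀.adjoint_eq]
  have e₁ (a b : H₁) : inner ℂ (A₁ a) b = inner ℂ a (A₁ b) := by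
    rw [← adjoint_inner_right, hA₁.adjoint_eq]
  rw [adjoint_inner_right, show u = (WithLp.equiv 2 (H₀ × H₁)).symm (u.fst, u.snd) from rfl, hM]
  simp only [WithLp.prod_inner_apply, WithLp.equiv_symm_apply, inner_add_left, inner_add_right,
    inner_neg_left, inner_neg_right, e₀, e₁, ← adjoint_inner_right B, adjoint_inner_left,
    map_neg, neg_apply, neg_neg]
  ring

end Block

theorem J_selfAdjoint_block_spectrum_real_general
    {H0 : Type*} [NormedAddCommGroup H0] [InnerProductSpace ℂ H0] [CompleteSpace H0]
    {H1 : Type*} [NormedAddCommGroup H1] [InnerProductSpace ℂ H1] [CompleteSpace H1]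
    (A0 : H0 →L[ℂ] H0) (A1 : H1 →L[ℂ] H1)
    (hA0 : IsSelfAdjoint A0) (hA1 : IsSelfAdjoint A1)
    (d : ℝ)
    (hd : d = sInf {t : ℝ | ∃ μ ∈ spectrum ℂ A0, ∃ ν ∈ spectrum ℂ A1, t = dist μ ν})
    (B : H1 →L[ℂ] H0) (hB : ‖B‖ < d / 2)
    (L : WithLp 2 (H0 × H1) →L[ℂ] WithLp 2 (H0 × H1))
    (hL : ∀ (x0 : H0) (x1 : H1),
      L ((WithLp.equiv 2 (H0 × H1)).symm (x0, x1)) =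
        (WithLp.equiv 2 (H0 × H1)).symm (A0 x0 + B x1, -(adjoint B) x0 + A1 x1)) :
    ∀ z ∈ spectrum ℂ L, z.im = 0 := by
  intro z hz
  by_contra hz_im
  have hsep (w : ℂ) :
      d ≤ Metric.infDist w (spectrum ℂ A0) + Metric.infDist w (spectrum ℂ A1) :=
    hd ▸ sInf_dist_le_infDist_add_infDist _ _ w
  have hBd : 2 * ‖B‖ < d := by linarith
  have hblock : HasBlockForm A0 A1 B L := hL
  obtain ⟨K, hK⟩ := hblock.exists_antilipschitzWith_algebraMap_sub hA0 hA1 hBd hz_im (hsep z)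
  obtain ⟨K', hK'⟩ := (hblock.adjoint hA0 hA1).exists_antilipschitzWith_algebraMap_sub hA0 hA1
    (by rwa [norm_neg]) (z := star z) (by simpa using hz_im) (hsep _)
  have hadj : adjoint (algebraMap ℂ _ z - L) = algebraMap ℂ _ (star z) - adjoint L := by
    rw [map_sub, ← star_eq_adjoint (algebraMap ℂ _ z), algebraMap_star_comm]
  exact spectrum.mem_iff.mp hz
    (isUnit_of_antilipschitz_of_injective_adjoint hK (hadj ▸ hK'.injective))

/-- Theorem 5.10 of the paper (bounded-operator setting): let `A0`, `A1` be bounded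
self-adjoint operators with disjoint spectra separated by the distance `d > 0` (no further
assumption on the mutual position of the spectra), let `B : H1 → H0` be a bounded operator
with `‖B‖ < d/2`, and let `L` be the block operator matrix
`L(x0,x1) = (A0 x0 + B x1, -B* x0 + A1 x1)` on the Hilbert direct sum `H = H0 ⊕ H1`.
Then the spectrum of `L` is real: every spectral point of `L` has zero imaginary part. -/
theorem J_selfAdjoint_block_spectrum_real
    {H0 : Type*} [NormedAddCommGroup H0] [InnerProductSpace ℂ H0] [CompleteSpace H0]
    {H1 : Type*} [NormedAddCommGroup H1] [InnerProductSpace ℂ H1] [CompleteSpace H1]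
    (A0 : H0 →L[ℂ] H0) (A1 : H1 →L[ℂ] H1)
    (hA0 : IsSelfAdjoint A0) (hA1 : IsSelfAdjoint A1)
    (hdisj : spectrum ℂ A0 ∩ spectrum ℂ A1 = ∅)
    (d : ℝ)
    (hd : d = sInf {t : ℝ | ∃ μ ∈ spectrum ℂ A0, ∃ ν ∈ spectrum ℂ A1, t = dist μ ν})
    (hd0 : 0 < d)
    (B : H1 →L[ℂ] H0) (hB : ‖B‖ < d / 2)
    (L : WithLp 2 (H0 × H1) →L[ℂ] WithLp 2 (H0 × H1))
    (hL : ∀ (x0 : H0) (x1 : H1),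
      L ((WithLp.equiv 2 (H0 × H1)).symm (x0, x1)) =
        (WithLp.equiv 2 (H0 × H1)).symm (A0 x0 + B x1, -(adjoint B) x0 + A1 x1)) :
    ∀ z ∈ spectrum ℂ L, z.im = 0 :=
  J_selfAdjoint_block_spectrum_real_general A0 A1 hA0 hA1 d hd B hB L hL
end
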